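/- For every natural number n, the trace of the bi-periodic Jacobsthal matrix J_n equals (b/a)^{ε(n)}·(j_{n+1} + 2·j_{n−1}), where ε(n) = 0 if n is even and 1 if n is odd; that is, trace(J_n) = (b/a)^{ε(n)}·C_n, where C_n = 2j_{n−1} + j_{n+1}. -/

import Mathlib

noncomputable def jj (a b : ℝ) : ℕ → ℝ
  | 0 => 0
  | 1 => 1
  | n + 2 => (if Even (n + 2) then a else b) * jj a b (n + 1) + 2 * jj a b n

noncomputable def JM (a b : ℝ) : ℕ → Matrix (Fin 2) (Fin 2) ℝ
  | 0 => 1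
  | 1 => !![b, 2 * b / a; 1, 0]
  | n + 2 => (if Even (n + 2) then a else b) • JM a b (n + 1) + (2 : ℝ) • JM a b n

lemma jrec (a b : ℝ) (n : ℕ) :
    jj a b (n + 1) = (if Even (n + 1) then a else b) * jj a b n
      + 2 * (if n = 0 then (1 / 2 : ℝ) else jj a b (n - 1)) := by
  cases n with
  | zero => simp [jj]
  | succ k => simp [jj]

lemma JMtrace (a b : ℝ) (n : ℕ) :
    (JM a b (n + 2)).trace = (if Even (n + 2) then a else b) * (JM a b (n + 1)).trace
      + 2 * (JM a b n).trace := by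
  simp only [JM, Matrix.trace_add, Matrix.trace_smul, smul_eq_mul]

theorem stmt13 (a b : ℝ) (ha : a ≠ 0) (hb : b ≠ 0) (n : ℕ) :
    (JM a b n).trace
      = (b / a) ^ (n % 2)
          * (2 * (if n = 0 then (1 / 2 : ℝ) else jj a b (n - 1)) + jj a b (n + 1)) := by
  induction n using Nat.twoStepInduction with
  | zero =>
    simp [JM, jj, Matrix.trace_one]
    norm_num
  | one =>
    have h2 : jj a b 2 = a := by simp [jj]
    simp [JM, Matrix.trace_fin_two_of, jj, h2]
    field_simp
  | more n ih1 ih2 =>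
    have ht := JMtrace a b n
    have hr1 := jrec a b (n + 2)
    have hr0 := jrec a b n
    have hn2 : ¬ (n + 2 = 0) := by omega
    rw [show n + 2 + 1 = n + 3 from rfl] at hr1
    rcases Nat.even_or_odd n with he | ho
    · have e1 : ¬ Even (n + 1) := by simp [Nat.even_add_one, he]
      have e2 : Even (n + 2) := by simpa [Nat.even_add_one] using e1
      have e3 : ¬ Even (n + 3) := by simp [Nat.even_add_one, e2]
      have h0 : n % 2 = 0 := Nat.even_iff.mp he
      have h1 : (n + 1) % 2 = 1 := by omega
      have hp2 : (n + 2) % 2 = 0 := by omega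
      rw [if_neg e1] at hr0
      rw [if_neg e3] at hr1
      have hX : (2 : ℝ) * (if n = 0 then (1 / 2 : ℝ) else jj a b (n - 1))
          = jj a b (n + 1) - b * jj a b n := by linarith
      rw [ht, ih1, ih2, if_pos e2, hp2, h0, h1, if_neg hn2]
      simp only [Nat.add_sub_cancel, pow_zero, pow_one]
      rw [hr1, hX]
      rw [if_neg hn2, show n + 2 - 1 = n + 1 by omega, if_neg (by omega : ¬ n + 1 = 0)]
      field_simp
      ring
    · have e1 : Even (n + 1) := Nat.even_add_one.mpr (Nat.not_even_iff_odd.mpr ho)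
      have e2 : ¬ Even (n + 2) := by simp [Nat.even_add_one, e1]
      have e3 : Even (n + 3) := by simpa [Nat.even_add_one] using e2
      have hn0 : n ≠ 0 := by rintro rfl; simp [Nat.odd_iff] at ho
      have h0 : n % 2 = 1 := Nat.odd_iff.mp ho
      have h1 : (n + 1) % 2 = 0 := by omega
      have hp2 : (n + 2) % 2 = 1 := by omega
      rw [if_pos e1, if_neg hn0] at hr0
      rw [if_pos e3] at hr1
      have hX : (2 : ℝ) * jj a b (n - 1) = jj a b (n + 1) - a * jj a b n := by linarith
      rw [ht, ih1, ih2, if_neg e2, hp2, h0, h1, if_neg hn2, if_neg hn0]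
      simp only [Nat.add_sub_cancel, pow_zero, pow_one]
      rw [hr1, hX]
      rw [if_neg hn2, show n + 2 - 1 = n + 1 by omega, if_neg (by omega : ¬ n + 1 = 0)]
      field_simp
      ring
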